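/- arXiv:2509.26334 — 4 statements merged into one kernel-verified Lean document; each statement's English description precedes it below -/
import Mathlib

section
/- Let (u^d, y^d) be a length-T trajectory of a discrete-time LTI system with matrices A ∈ ℝ^{n×n}, B ∈ ℝ^{n×m}, C ∈ ℝ^{p×n}, D ∈ ℝ^{p×m}, and let 1 ≤ L ≤ T. Then every vector in the column space of the stacked block Hankel matrix col(H_L(u^d), H_L(y^d)) ∈ ℝ^{(mL+pL)×(T−L+1)} is the stacked vector col(u, y) of some length-L trajectory (u, y) of the system. That is, the column space of the stacked Hankel matrix is contained in the subspace of length-L trajectories. -/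
/-- Flatten `w : Fin L → Fin q → ℝ` into the vector `col(w 0, …, w (L-1)) ∈ ℝ^(qL)`. -/
def flatten {L q : ℕ} (w : Fin L → Fin q → ℝ) : Fin (q * L) → ℝ :=
  fun i =>
    have hq : 0 < q := by
      have hpos := i.pos
      rcases Nat.eq_zero_or_pos q with h | h
      · subst h; simp at hpos
      · exact h
    w ⟨(i : ℕ) / q, by
        rw [Nat.div_lt_iff_lt_mul hq, Nat.mul_comm L q]; exact i.isLt⟩
      ⟨(i : ℕ) % q, Nat.mod_lt _ hq⟩

/-- Stacked vector `col(u, y) ∈ ℝ^(mL + pL)`, listing `u 0, …, u (L-1)` followed by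
`y 0, …, y (L-1)`. -/
def stackVec {L m p : ℕ} (u : Fin L → Fin m → ℝ) (y : Fin L → Fin p → ℝ) :
    Fin (m * L + p * L) → ℝ :=
  Fin.append (flatten u) (flatten y)

/-- `(u, y)` is a length-`L` input–output trajectory of the LTI system `(A, B, C, D)`:
there is a state sequence `x` with `x (k+1) = A x k + B u k` and `y k = C x k + D u k`. -/
def IsTrajectory {n m p : ℕ} (A : Matrix (Fin n) (Fin n) ℝ) (B : Matrix (Fin n) (Fin m) ℝ)
    (C : Matrix (Fin p) (Fin n) ℝ) (D : Matrix (Fin p) (Fin m) ℝ)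
    {L : ℕ} (u : Fin L → Fin m → ℝ) (y : Fin L → Fin p → ℝ) : Prop :=
  ∃ x : Fin (L + 1) → Fin n → ℝ,
    (∀ k : Fin L, x k.succ = A.mulVec (x k.castSucc) + B.mulVec (u k)) ∧
    (∀ k : Fin L, y k = C.mulVec (x k.castSucc) + D.mulVec (u k))

/-- Stacked block Hankel matrix `col(H_L(u), H_L(y))` of depth `L`: its `j`-th column is
the stacked vector of the length-`L` window of `(u, y)` starting at time `j`, i.e. the
`(i, j)`-th block entries are `u (i + j)` and `y (i + j)`. -/
def stackedHankel {T m p : ℕ} (L : ℕ) (hLT : L ≤ T)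
    (u : Fin T → Fin m → ℝ) (y : Fin T → Fin p → ℝ) :
    Matrix (Fin (m * L + p * L)) (Fin (T - L + 1)) ℝ :=
  fun i j =>
    stackVec (fun k : Fin L => u ⟨(k : ℕ) + (j : ℕ), by have := k.isLt; have := j.isLt; omega⟩)
      (fun k : Fin L => y ⟨(k : ℕ) + (j : ℕ), by have := k.isLt; have := j.isLt; omega⟩) i

lemma mulVec_lincomb {n q J : ℕ} (A : Matrix (Fin n) (Fin q) ℝ) (c : Fin J → ℝ)
    (v : Fin J → Fin q → ℝ) (i : Fin n) :
    A.mulVec (fun a => ∑ j, c j * v j a) i = ∑ j, c j * A.mulVec (v j) i := by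
  simp only [Matrix.mulVec, dotProduct, Finset.mul_sum]
  rw [Finset.sum_comm]
  exact Finset.sum_congr rfl fun j _ => Finset.sum_congr rfl fun a _ => by ring

/-- If `(ud, yd)` is a length-`T` trajectory of the LTI system `(A, B, C, D)` and
`1 ≤ L ≤ T`, then every vector in the column space of the stacked block Hankel matrix
`col(H_L(ud), H_L(yd))` is the stacked vector `col(u, y)` of some length-`L` trajectory
`(u, y)` of the system. -/
theorem hankel_column_space_subset_trajectories
    (n m p T L : ℕ) (hL : 1 ≤ L) (hLT : L ≤ T)
    (A : Matrix (Fin n) (Fin n) ℝ) (B : Matrix (Fin n) (Fin m) ℝ)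
    (C : Matrix (Fin p) (Fin n) ℝ) (D : Matrix (Fin p) (Fin m) ℝ)
    (ud : Fin T → Fin m → ℝ) (yd : Fin T → Fin p → ℝ)
    (hd : IsTrajectory A B C D ud yd) :
    ∀ c : Fin (T - L + 1) → ℝ,
      ∃ (u : Fin L → Fin m → ℝ) (y : Fin L → Fin p → ℝ),
        IsTrajectory A B C D u y ∧ (stackedHankel L hLT ud yd).mulVec c = stackVec u y := by
  obtain ⟨xd, hx, hy⟩ := hd
  intro c
  have h1 : ∀ (k : Fin L) (j : Fin (T - L + 1)), (k : ℕ) + (j : ℕ) < T := by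
    intro k j; have := k.isLt; have := j.isLt; omega
  have h2 : ∀ (k : Fin (L + 1)) (j : Fin (T - L + 1)), (k : ℕ) + (j : ℕ) < T + 1 := by
    intro k j; have := k.isLt; have := j.isLt; omega
  refine ⟨fun k b => ∑ j, c j * ud ⟨(k : ℕ) + (j : ℕ), h1 k j⟩ b,
          fun k b => ∑ j, c j * yd ⟨(k : ℕ) + (j : ℕ), h1 k j⟩ b,
          ⟨fun k b => ∑ j, c j * xd ⟨(k : ℕ) + (j : ℕ), h2 k j⟩ b, ?_, ?_⟩, ?_⟩
  · intro k
    funext i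
    simp only [Pi.add_apply, mulVec_lincomb]
    rw [← Finset.sum_add_distrib]
    refine Finset.sum_congr rfl fun j _ => ?_
    have e1 : (⟨(k : ℕ) + (j : ℕ), h1 k j⟩ : Fin T).succ
        = ⟨((k.succ : Fin (L+1)) : ℕ) + (j : ℕ), h2 k.succ j⟩ := by
      ext; simp; omega
    have e2 : (⟨(k : ℕ) + (j : ℕ), h1 k j⟩ : Fin T).castSucc
        = ⟨((k.castSucc : Fin (L+1)) : ℕ) + (j : ℕ), h2 k.castSucc j⟩ := by
      ext; simp
    have := congrFun (hx ⟨(k : ℕ) + (j : ℕ), h1 k j⟩) i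
    rw [e1, e2] at this
    rw [this]
    simp [mul_add]
  · intro k
    funext i
    simp only [Pi.add_apply, mulVec_lincomb]
    rw [← Finset.sum_add_distrib]
    refine Finset.sum_congr rfl fun j _ => ?_
    have e2 : (⟨(k : ℕ) + (j : ℕ), h1 k j⟩ : Fin T).castSucc
        = ⟨((k.castSucc : Fin (L+1)) : ℕ) + (j : ℕ), h2 k.castSucc j⟩ := by
      ext; simp
    have := congrFun (hy ⟨(k : ℕ) + (j : ℕ), h1 k j⟩) i
    rw [e2] at this
    rw [this]
    simp [mul_add]
  · funext i
    simp only [Matrix.mulVec, dotProduct, stackedHankel, stackVec, Fin.append,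
      Fin.addCases, eq_rec_constant]
    split_ifs with h
    · simp only [flatten]
      exact Finset.sum_congr rfl fun j _ => mul_comm _ _
    · simp only [flatten]
      exact Finset.sum_congr rfl fun j _ => mul_comm _ _
end

section
/- For a discrete-time LTI system with matrices A ∈ ℝ^{n×n}, B ∈ ℝ^{n×m}, C ∈ ℝ^{p×n}, D ∈ ℝ^{p×m} and window length L ≥ 1, the dimension of the linear subspace of stacked length-L trajectories col(u, y) ∈ ℝ^{mL+pL} equals mL + rank(O_L), where O_L = col(C, CA, …, CA^{L−1}) is the depth-L extended observability matrix. In particular, the dimension is at most mL + n, with equality if and only if rank(O_L) = n. -/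
/-- Depth-`L` extended observability matrix `O_L = col(C, CA, …, CA^(L-1))`. -/
def obsMat {n p : ℕ} (A : Matrix (Fin n) (Fin n) ℝ) (C : Matrix (Fin p) (Fin n) ℝ)
    (L : ℕ) : Matrix (Fin L × Fin p) (Fin n) ℝ :=
  fun i j => (C * A ^ (i.1 : ℕ)) i.2 j

namespace Traj

lemma flatten_add {L q : ℕ} (a b : Fin L → Fin q → ℝ) :
    flatten (a + b) = flatten a + flatten b := by
  funext i; simp [flatten]

lemma flatten_smul {L q : ℕ} (c : ℝ) (a : Fin L → Fin q → ℝ) :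
    flatten (c • a) = c • flatten a := by
  funext i; simp [flatten]

lemma flatten_eq_zero {L q : ℕ} (w : Fin L → Fin q → ℝ) :
    flatten w = 0 ↔ w = 0 := by
  constructor
  · intro h
    funext k j
    have hq : 0 < q := j.pos
    have hlt : (j : ℕ) + q * (k : ℕ) < q * L := by
      calc (j:ℕ) + q * k < q + q * k := by omega
        _ = q * (k+1) := by ring
        _ ≤ q * L := Nat.mul_le_mul_left _ k.isLt
    have := congrFun h ⟨(j : ℕ) + q * (k : ℕ), hlt⟩
    have hdiv : ((j : ℕ) + q * (k : ℕ)) / q = k := by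
      rw [Nat.add_mul_div_left _ _ hq, Nat.div_eq_of_lt j.isLt, Nat.zero_add]
    have hmod : ((j : ℕ) + q * (k : ℕ)) % q = j := by
      rw [Nat.add_mul_mod_self_left, Nat.mod_eq_of_lt j.isLt]
    simp only [flatten] at this
    rw [show (⟨((j : ℕ) + q * (k : ℕ)) / q, _⟩ : Fin L) = k from Fin.ext hdiv,
        show (⟨((j : ℕ) + q * (k : ℕ)) % q, _⟩ : Fin q) = j from Fin.ext hmod] at this
    simpa using this
  · intro h; subst h; funext i; simp [flatten]

lemma stackVec_add {L m p : ℕ} (u u' : Fin L → Fin m → ℝ) (y y' : Fin L → Fin p → ℝ) :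
    stackVec (u + u') (y + y') = stackVec u y + stackVec u' y' := by
  unfold stackVec
  rw [flatten_add, flatten_add]
  funext i
  refine Fin.addCases (fun i => ?_) (fun i => ?_) i <;>
    simp [Fin.append_left, Fin.append_right]

lemma stackVec_smul {L m p : ℕ} (c : ℝ) (u : Fin L → Fin m → ℝ) (y : Fin L → Fin p → ℝ) :
    stackVec (c • u) (c • y) = c • stackVec u y := by
  unfold stackVec
  rw [flatten_smul, flatten_smul]
  funext i
  refine Fin.addCases (fun i => ?_) (fun i => ?_) i <;>
    simp [Fin.append_left, Fin.append_right]

lemma stackVec_eq_zero {L m p : ℕ} (u : Fin L → Fin m → ℝ) (y : Fin L → Fin p → ℝ) :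
    stackVec u y = 0 ↔ u = 0 ∧ y = 0 := by
  rw [← flatten_eq_zero u, ← flatten_eq_zero y]
  constructor
  · intro h
    constructor
    · funext i; have := congrFun h (Fin.castAdd _ i)
      simpa [stackVec, Fin.append_left] using this
    · funext i; have := congrFun h (Fin.natAdd _ i)
      simpa [stackVec, Fin.append_right] using this
  · rintro ⟨h1, h2⟩
    funext i
    refine Fin.addCases (fun i => ?_) (fun i => ?_) i <;>
      simp [stackVec, Fin.append_left, Fin.append_right, h1, h2]

variable {n m p L : ℕ}
variable (A : Matrix (Fin n) (Fin n) ℝ) (B : Matrix (Fin n) (Fin m) ℝ)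
variable (C : Matrix (Fin p) (Fin n) ℝ) (D : Matrix (Fin p) (Fin m) ℝ)

/-- Forward state sequence driven by input `u` (extended by zero) from initial state `x0`. -/
def xseq (u : Fin L → Fin m → ℝ) (x0 : Fin n → ℝ) : ℕ → Fin n → ℝ
  | 0 => x0
  | k + 1 => A.mulVec (xseq u x0 k) + B.mulVec (if h : k < L then u ⟨k, h⟩ else 0)

lemma xseq_add (u v : Fin L → Fin m → ℝ) (x0 x1 : Fin n → ℝ) (k : ℕ) :
    xseq A B (u + v) (x0 + x1) k = xseq A B u x0 k + xseq A B v x1 k := by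
  induction k with
  | zero => rfl
  | succ k ih =>
      simp only [xseq, ih, Matrix.mulVec_add]
      have : (if h : k < L then (u + v) ⟨k, h⟩ else 0) =
          (if h : k < L then u ⟨k, h⟩ else 0) + (if h : k < L then v ⟨k, h⟩ else 0) := by
        split_ifs <;> simp
      rw [this, Matrix.mulVec_add]
      abel

lemma xseq_smul (c : ℝ) (u : Fin L → Fin m → ℝ) (x0 : Fin n → ℝ) (k : ℕ) :
    xseq A B (c • u) (c • x0) k = c • xseq A B u x0 k := by
  induction k with
  | zero => rfl
  | succ k ih =>
      simp only [xseq, ih, Matrix.mulVec_smul]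
      have : (if h : k < L then (c • u) ⟨k, h⟩ else 0) =
          c • (if h : k < L then u ⟨k, h⟩ else 0) := by
        split_ifs <;> simp
      rw [this, Matrix.mulVec_smul, smul_add]

lemma xseq_zero_input (x0 : Fin n → ℝ) (k : ℕ) :
    xseq A B (0 : Fin L → Fin m → ℝ) x0 k = (A ^ k).mulVec x0 := by
  induction k with
  | zero => simp [xseq]
  | succ k ih =>
      simp only [xseq, ih]
      have : (if h : k < L then (0 : Fin L → Fin m → ℝ) ⟨k, h⟩ else 0) = 0 := by
        split_ifs <;> rfl
      rw [this, Matrix.mulVec_zero, add_zero, Matrix.mulVec_mulVec, ← pow_succ']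

/-- Output sequence generated by input `u` and initial state `x0`. -/
def yfun (u : Fin L → Fin m → ℝ) (x0 : Fin n → ℝ) : Fin L → Fin p → ℝ :=
  fun k => C.mulVec (xseq A B u x0 (k : ℕ)) + D.mulVec (u k)

/-- Linear map sending `(u, x0)` to the stacked trajectory vector. -/
def T : ((Fin L → Fin m → ℝ) × (Fin n → ℝ)) →ₗ[ℝ] (Fin (m * L + p * L) → ℝ) where
  toFun w := stackVec w.1 (yfun A B C D w.1 w.2)
  map_add' w w' := by
    have hy : yfun A B C D (w.1 + w'.1) (w.2 + w'.2) =
        yfun A B C D w.1 w.2 + yfun A B C D w'.1 w'.2 := by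
      funext k
      simp only [yfun, xseq_add, Matrix.mulVec_add, Pi.add_apply]
      abel
    show stackVec (w.1 + w'.1) (yfun A B C D (w.1 + w'.1) (w.2 + w'.2)) = _
    rw [hy, stackVec_add]
  map_smul' c w := by
    have hy : yfun A B C D (c • w.1) (c • w.2) = c • yfun A B C D w.1 w.2 := by
      funext k
      simp only [yfun, xseq_smul, Matrix.mulVec_smul, Pi.smul_apply, smul_add]
    show stackVec (c • w.1) (yfun A B C D (c • w.1) (c • w.2)) = _
    rw [hy, stackVec_smul]
    rfl

lemma traj_of_T (u : Fin L → Fin m → ℝ) (x0 : Fin n → ℝ) :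
    IsTrajectory A B C D u (yfun A B C D u x0) := by
  refine ⟨fun k => xseq A B u x0 (k : ℕ), fun k => ?_, fun k => ?_⟩
  · show xseq A B u x0 ((k : ℕ) + 1) = A.mulVec (xseq A B u x0 (k : ℕ)) + B.mulVec (u k)
    simp only [xseq]
    congr 1
    rw [dif_pos k.isLt]
  · rfl

lemma xseq_of_traj (u : Fin L → Fin m → ℝ) (x : Fin (L + 1) → Fin n → ℝ)
    (hx : ∀ k : Fin L, x k.succ = A.mulVec (x k.castSucc) + B.mulVec (u k)) :
    ∀ (k : ℕ) (hk : k ≤ L), x ⟨k, Nat.lt_succ_of_le hk⟩ = xseq A B u (x 0) k := by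
  intro k
  induction k with
  | zero => intro hk; rfl
  | succ k ih =>
      intro hk
      have hkL : k < L := hk
      have := hx ⟨k, hkL⟩
      have hsucc : (⟨k, hkL⟩ : Fin L).succ = ⟨k + 1, Nat.lt_succ_of_le hk⟩ := rfl
      have hcast : (⟨k, hkL⟩ : Fin L).castSucc = ⟨k, Nat.lt_succ_of_le (Nat.le_of_lt hkL)⟩ := rfl
      rw [hsucc, hcast] at this
      rw [this, ih (Nat.le_of_lt hkL)]
      simp only [xseq]
      congr 1
      rw [dif_pos hkL]

lemma range_T_eq (S : Submodule ℝ (Fin (m * L + p * L) → ℝ))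
    (hS : (S : Set (Fin (m * L + p * L) → ℝ)) =
      {z | ∃ (u : Fin L → Fin m → ℝ) (y : Fin L → Fin p → ℝ),
        IsTrajectory A B C D u y ∧ z = stackVec u y}) :
    LinearMap.range (T A B C D) = S := by
  apply SetLike.coe_injective
  rw [hS]
  ext z
  constructor
  · rintro ⟨⟨u, x0⟩, rfl⟩
    exact ⟨u, yfun A B C D u x0, traj_of_T A B C D u x0, rfl⟩
  · rintro ⟨u, y, ⟨x, hx, hy⟩, rfl⟩
    refine ⟨(u, x 0), ?_⟩
    show stackVec u (yfun A B C D u (x 0)) = stackVec u y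
    have hyy : yfun A B C D u (x 0) = y := by
      funext k
      have hk := xseq_of_traj A B u x hx (k : ℕ) (Nat.le_of_lt k.isLt)
      have hcast : (⟨(k : ℕ), Nat.lt_succ_of_le (Nat.le_of_lt k.isLt)⟩ : Fin (L+1)) = k.castSucc := rfl
      rw [hcast] at hk
      rw [hy k]
      simp only [yfun]
      rw [hk]
    rw [hyy]

lemma mem_ker_T (u : Fin L → Fin m → ℝ) (x0 : Fin n → ℝ) :
    (u, x0) ∈ LinearMap.ker (T A B C D) ↔
      u = 0 ∧ (obsMat A C L).mulVecLin x0 = 0 := by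
  rw [LinearMap.mem_ker]
  show stackVec u (yfun A B C D u x0) = 0 ↔ _
  rw [stackVec_eq_zero]
  constructor
  · rintro ⟨hu, hy⟩
    subst hu
    refine ⟨rfl, ?_⟩
    funext i
    obtain ⟨k, j⟩ := i
    have := congrFun (congrFun hy k) j
    simp only [yfun, xseq_zero_input, Pi.zero_apply, Matrix.mulVec_zero, add_zero,
      Matrix.mulVec_mulVec] at this
    rw [Matrix.mulVecLin_apply]
    show (obsMat A C L).mulVec x0 (k, j) = 0
    rw [show (obsMat A C L).mulVec x0 (k, j) = ((C * A ^ (k : ℕ)).mulVec x0) j from rfl]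
    exact this
  · rintro ⟨hu, hO⟩
    subst hu
    refine ⟨rfl, ?_⟩
    funext k j
    have := congrFun hO (k, j)
    rw [Matrix.mulVecLin_apply] at this
    simp only [yfun, xseq_zero_input, Pi.zero_apply, Matrix.mulVec_zero, add_zero,
      Matrix.mulVec_mulVec]
    exact this

lemma finrank_ker_T :
    Module.finrank ℝ (LinearMap.ker (T A B C D (L := L))) =
      Module.finrank ℝ (LinearMap.ker (obsMat A C L).mulVecLin) := by
  refine LinearEquiv.finrank_eq (LinearEquiv.ofBijective ?_ ⟨?_, ?_⟩)
  · exact LinearMap.codRestrict _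
      ((LinearMap.snd ℝ _ _).comp (LinearMap.ker (T A B C D)).subtype)
      (fun w => ((mem_ker_T A B C D w.1.1 w.1.2).1 w.2).2)
  · rintro ⟨⟨u, x0⟩, hw⟩ ⟨⟨u', x0'⟩, hw'⟩ h
    have hx : x0 = x0' := congrArg Subtype.val h
    have hu : u = 0 := ((mem_ker_T A B C D u x0).1 hw).1
    have hu' : u' = 0 := ((mem_ker_T A B C D u' x0').1 hw').1
    subst hx; subst hu; subst hu'; rfl
  · rintro ⟨x0, hx0⟩
    exact ⟨⟨(0, x0), (mem_ker_T A B C D 0 x0).2 ⟨rfl, hx0⟩⟩, rfl⟩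

end Traj

/-- The dimension of the linear subspace of stacked length-`L` trajectories
`col(u, y) ∈ ℝ^(mL + pL)` of the LTI system `(A, B, C, D)` equals `m*L + rank O_L`,
where `O_L` is the depth-`L` extended observability matrix. In particular it is at most
`m*L + n`, with equality iff `rank O_L = n`. -/
theorem trajectory_subspace_dim
    (n m p L : ℕ) (hL : 1 ≤ L)
    (A : Matrix (Fin n) (Fin n) ℝ) (B : Matrix (Fin n) (Fin m) ℝ)
    (C : Matrix (Fin p) (Fin n) ℝ) (D : Matrix (Fin p) (Fin m) ℝ)
    (S : Submodule ℝ (Fin (m * L + p * L) → ℝ))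
    (hS : (S : Set (Fin (m * L + p * L) → ℝ)) =
      {z | ∃ (u : Fin L → Fin m → ℝ) (y : Fin L → Fin p → ℝ),
        IsTrajectory A B C D u y ∧ z = stackVec u y}) :
    Module.finrank ℝ S = m * L + (obsMat A C L).rank ∧
    Module.finrank ℝ S ≤ m * L + n ∧
    (Module.finrank ℝ S = m * L + n ↔ (obsMat A C L).rank = n) := by
  have hST := Traj.range_T_eq A B C D S hS
  have hdom : Module.finrank ℝ ((Fin L → Fin m → ℝ) × (Fin n → ℝ)) = m * L + n := by
    simp [Module.finrank_prod, Module.finrank_pi_fintype]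
    ring
  have hrn := LinearMap.finrank_range_add_finrank_ker (Traj.T A B C D (L := L))
  rw [hdom, hST, Traj.finrank_ker_T] at hrn
  have hrnO := LinearMap.finrank_range_add_finrank_ker (obsMat A C L).mulVecLin
  have hdomO : Module.finrank ℝ (Fin n → ℝ) = n := by simp
  rw [hdomO] at hrnO
  have hrank : (obsMat A C L).rank = Module.finrank ℝ (LinearMap.range (obsMat A C L).mulVecLin) := rfl
  have hle : (obsMat A C L).rank ≤ n := by simpa using (obsMat A C L).rank_le_card_width
  rw [← hrank] at hrnO
  omega
end

section
/- Let (u^d, y^d) be a length-T trajectory of a discrete-time LTI system with matrices A ∈ ℝ^{n×n}, B ∈ ℝ^{n×m}, C ∈ ℝ^{p×n}, D ∈ ℝ^{p×m}, and let 1 ≤ L ≤ T. Then the rank of the stacked block Hankel matrix col(H_L(u^d), H_L(y^d)) ∈ ℝ^{(mL+pL)×(T−L+1)} is at most mL + n. -/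
/-!
Every column of `col(H_L(u), H_L(y))` is the stacked vector of a length-`L` window of the
trajectory, and each window is itself a length-`L` trajectory. The length-`L` trajectories
form a subspace, the projection of the subspace of state–input–output triples `(x, u, y)`
satisfying the system equations. On that subspace `(x, u, y) ↦ (x 0, u)` is injective, since
the initial state and the input determine the state sequence and hence the output; so it
has dimension at most `m L + n`, and so does the column space of the Hankel matrix.
-/

open scoped Matrix

namespace LTI

variable {K : Type*} [Field K] {n m p : ℕ}
  (A : Matrix (Fin n) (Fin n) K) (B : Matrix (Fin n) (Fin m) K)
  (C : Matrix (Fin p) (Fin n) K) (D : Matrix (Fin p) (Fin m) K)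

def stateBehavior (L : ℕ) :
    Submodule K ((Fin (L + 1) → Fin n → K) × (Fin L → Fin m → K) × (Fin L → Fin p → K)) where
  carrier := {w | (∀ k : Fin L, w.1 k.succ = A *ᵥ w.1 k.castSucc + B *ᵥ w.2.1 k) ∧
    ∀ k : Fin L, w.2.2 k = C *ᵥ w.1 k.castSucc + D *ᵥ w.2.1 k}
  add_mem' := by
    rintro w w' ⟨hx, hy⟩ ⟨hx', hy'⟩
    refine ⟨fun k => ?_, fun k => ?_⟩ <;>
      simp only [Prod.fst_add, Prod.snd_add, Pi.add_apply, Matrix.mulVec_add,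
        hx, hx', hy, hy'] <;>
      abel
  zero_mem' := by simp
  smul_mem' := by
    rintro c w ⟨hx, hy⟩
    refine ⟨fun k => ?_, fun k => ?_⟩ <;>
      simp [Matrix.mulVec_smul, hx, hy, smul_add]

def behavior (L : ℕ) : Submodule K ((Fin L → Fin m → K) × (Fin L → Fin p → K)) :=
  (stateBehavior A B C D L).map (LinearMap.snd K _ _)

variable {A B C D} in
theorem eq_of_mem_stateBehavior {L : ℕ}
    {w w' : (Fin (L + 1) → Fin n → K) × (Fin L → Fin m → K) × (Fin L → Fin p → K)}
    (hw : w ∈ stateBehavior A B C D L) (hw' : w' ∈ stateBehavior A B C D L)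
    (h0 : w.1 0 = w'.1 0) (hu : w.2.1 = w'.2.1) : w = w' := by
  obtain ⟨hx, hy⟩ := hw
  obtain ⟨hx', hy'⟩ := hw'
  have hstate : w.1 = w'.1 := funext fun k => by
    induction k using Fin.induction with
    | zero => exact h0
    | succ k ih => rw [hx, hx', ih, hu]
  have hout : w.2.2 = w'.2.2 := funext fun k => by rw [hy, hy', hstate, hu]
  exact Prod.ext hstate (Prod.ext hu hout)

theorem finrank_stateBehavior_le (L : ℕ) :
    Module.finrank K (stateBehavior A B C D L) ≤ m * L + n := by
  let f : stateBehavior A B C D L →ₗ[K] (Fin L → Fin m → K) × (Fin n → K) :=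
    (LinearMap.prod (LinearMap.fst K _ _ ∘ₗ LinearMap.snd K _ _)
      (LinearMap.proj 0 ∘ₗ LinearMap.fst K _ _)) ∘ₗ (stateBehavior A B C D L).subtype
  have hf : Function.Injective f := fun w w' h =>
    Subtype.ext <| eq_of_mem_stateBehavior w.2 w'.2 (Prod.ext_iff.1 h).2 (Prod.ext_iff.1 h).1
  simpa [Module.finrank_pi_fintype, mul_comm] using LinearMap.finrank_le_finrank_of_injective hf

theorem finrank_behavior_le (L : ℕ) :
    Module.finrank K (behavior A B C D L) ≤ m * L + n :=
  (Submodule.finrank_map_le _ _).trans (finrank_stateBehavior_le A B C D L)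

end LTI

theorem Matrix.rank_le_finrank_of_forall_col_mem {K ι κ : Type*} [Field K] [Fintype ι]
    [Fintype κ] (M : Matrix ι κ K) (S : Submodule K (ι → K)) (h : ∀ j, M.col j ∈ S) :
    M.rank ≤ Module.finrank K S := by
  rw [Matrix.rank_eq_finrank_span_cols]
  exact Submodule.finrank_mono (Submodule.span_le.2 (Set.range_subset_iff.2 h))

def stackVecLinearMap (L m p : ℕ) :
    (Fin L → Fin m → ℝ) × (Fin L → Fin p → ℝ) →ₗ[ℝ] (Fin (m * L + p * L) → ℝ) where
  toFun w := stackVec w.1 w.2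
  map_add' w w' := by
    ext i
    refine Fin.addCases (fun i => ?_) (fun i => ?_) i <;>
      simp only [stackVec, Prod.fst_add, Prod.snd_add, Fin.append_left, Fin.append_right,
        Pi.add_apply] <;> rfl
  map_smul' c w := by
    ext i
    refine Fin.addCases (fun i => ?_) (fun i => ?_) i <;>
      simp only [stackVec, Prod.smul_fst, Prod.smul_snd, Fin.append_left, Fin.append_right,
        Pi.smul_apply, RingHom.id_apply] <;> rfl

section

variable {n m p : ℕ} {A : Matrix (Fin n) (Fin n) ℝ} {B : Matrix (Fin n) (Fin m) ℝ}
  {C : Matrix (Fin p) (Fin n) ℝ} {D : Matrix (Fin p) (Fin m) ℝ}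

theorem IsTrajectory.window {T : ℕ} {u : Fin T → Fin m → ℝ} {y : Fin T → Fin p → ℝ}
    (hd : IsTrajectory A B C D u y) (L j : ℕ) (h : L + j ≤ T) :
    IsTrajectory A B C D (fun k : Fin L => u ⟨k + j, by omega⟩)
      (fun k : Fin L => y ⟨k + j, by omega⟩) := by
  obtain ⟨x, hx, hy⟩ := hd
  refine ⟨fun k => x ⟨k + j, by omega⟩, fun k => ?_, fun k => hy ⟨k + j, by omega⟩⟩
  convert hx ⟨k + j, by omega⟩ using 2
  · ext
    simp only [Fin.val_succ]
    omega
  · rfl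

theorem IsTrajectory.mem_behavior {L : ℕ} {u : Fin L → Fin m → ℝ} {y : Fin L → Fin p → ℝ}
    (hd : IsTrajectory A B C D u y) : (u, y) ∈ LTI.behavior A B C D L := by
  obtain ⟨x, hx, hy⟩ := hd
  exact ⟨(x, u, y), ⟨hx, hy⟩, rfl⟩

end

theorem stackedHankel_rank_le_general
    (n m p T L : ℕ) (hLT : L ≤ T)
    (A : Matrix (Fin n) (Fin n) ℝ) (B : Matrix (Fin n) (Fin m) ℝ)
    (C : Matrix (Fin p) (Fin n) ℝ) (D : Matrix (Fin p) (Fin m) ℝ)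
    (ud : Fin T → Fin m → ℝ) (yd : Fin T → Fin p → ℝ)
    (hd : IsTrajectory A B C D ud yd) :
    (stackedHankel L hLT ud yd).rank ≤ m * L + n :=
  calc (stackedHankel L hLT ud yd).rank
      ≤ Module.finrank ℝ ((LTI.behavior A B C D L).map (stackVecLinearMap L m p)) :=
        Matrix.rank_le_finrank_of_forall_col_mem _ _ fun j =>
          Submodule.mem_map_of_mem (hd.window L j (by omega)).mem_behavior
    _ ≤ Module.finrank ℝ (LTI.behavior A B C D L) := Submodule.finrank_map_le _ _
    _ ≤ m * L + n := LTI.finrank_behavior_le A B C D L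

/-- If `(ud, yd)` is a length-`T` trajectory of the LTI system `(A, B, C, D)` with state
dimension `n` and `1 ≤ L ≤ T`, then the rank of the stacked block Hankel matrix
`col(H_L(ud), H_L(yd))` is at most `m*L + n`. -/
theorem stackedHankel_rank_le
    (n m p T L : ℕ) (hL : 1 ≤ L) (hLT : L ≤ T)
    (A : Matrix (Fin n) (Fin n) ℝ) (B : Matrix (Fin n) (Fin m) ℝ)
    (C : Matrix (Fin p) (Fin n) ℝ) (D : Matrix (Fin p) (Fin m) ℝ)
    (ud : Fin T → Fin m → ℝ) (yd : Fin T → Fin p → ℝ)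
    (hd : IsTrajectory A B C D ud yd) :
    (stackedHankel L hLT ud yd).rank ≤ m * L + n :=
  stackedHankel_rank_le_general n m p T L hLT A B C D ud yd hd
end

section
/- (Willems' Fundamental Lemma, as used by the paper.) Let (u^d, y^d) be a length-T trajectory of a discrete-time LTI system with matrices A ∈ ℝ^{n×n}, B ∈ ℝ^{n×m}, C ∈ ℝ^{p×n}, D ∈ ℝ^{p×m}, where (A, B) is controllable (the matrix [B, AB, …, A^{n−1}B] has rank n) and (A, C) is observable (the matrix col(C, CA, …, CA^{n−1}) has rank n). Let L ≥ 1 satisfy rank(O_L) = n, where O_L = col(C, CA, …, CA^{L−1}). If the input u^d is persistently exciting of order L + n, i.e., the depth-(L+n) block Hankel matrix H_{L+n}(u^d) has full row rank m(L+n), then the column space of the stacked Hankel matrix col(H_L(u^d), H_L(y^d)) equals the subspace of all stacked length-L trajectories col(u, y) of the system; equivalently, rank(col(H_L(u^d), H_L(y^d))) = mL + n. -/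
/-- Depth-`L` block Hankel matrix of a sequence `w : Fin T → Fin q → ℝ`:
the `(i, j)`-th `q`-dimensional block is `w (i + j)`. -/
def Hankel {T q : ℕ} (L : ℕ) (hLT : L ≤ T) (w : Fin T → Fin q → ℝ) :
    Matrix (Fin L × Fin q) (Fin (T - L + 1)) ℝ :=
  fun i j => w ⟨(i.1 : ℕ) + (j : ℕ), by have h1 := i.1.isLt; have h2 := j.isLt; omega⟩ i.2

/-- Controllability matrix `[B, AB, …, A^(n-1) B]`. -/
def ctrbMat {n m : ℕ} (A : Matrix (Fin n) (Fin n) ℝ) (B : Matrix (Fin n) (Fin m) ℝ) :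
    Matrix (Fin n) (Fin n × Fin m) ℝ :=
  fun i j => (A ^ (j.1 : ℕ) * B) i j.2

/-!
The stacked Hankel matrix factors as `Φ ∘ col(X, H_L(u))`, where `X` collects the data states at
the window starts and `Φ (x₀, u) = col(u, y)` maps an initial state and an input to the resulting
trajectory; `Φ` is injective because `rank O_L = n`, so everything reduces to `col(X, H_L(u))`
having full row rank.

A left-kernel vector `(η, ξ)` of that matrix is a relation `η ⬝ᵥ x j + (ξ(σ) u)(j) = 0` holding at
every window start, with `ξ` a row polynomial of degree `< L` in the shift `σ`. Shifting it `i`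
steps and rewriting `x (j + i)` through the state equation, then combining the shifts with the
coefficients of the characteristic polynomial of `A`, eliminates the state (Cayley–Hamilton) and
leaves a polynomial of degree `< L + n` in `σ` annihilating `u`; persistency of excitation makes it
zero. A leading-coefficient argument then gives `ξ = 0` and `η Aᵏ B = 0` for `k < n`, hence
`η = 0` by controllability.
-/

open Matrix Finset
open scoped Polynomial

namespace Matrix

variable {K ι κ : Type*} [Field K] [Fintype ι] [Fintype κ]

theorem vecMul_injective_of_rank_eq_card {M : Matrix ι κ K} (h : M.rank = Fintype.card ι) :
    Function.Injective M.vecMul := by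
  rw [vecMul_injective_iff, linearIndependent_iff_card_eq_finrank_span, Set.finrank,
    ← rank_eq_finrank_span_row, h]

theorem mulVec_injective_of_rank_eq_card {M : Matrix ι κ K} (h : M.rank = Fintype.card κ) :
    Function.Injective M.mulVec := by
  have := vecMul_injective_of_rank_eq_card (M := Mᵀ) (by rwa [rank_transpose])
  simpa only [vecMul_transpose] using this

theorem mulVec_surjective_of_vecMul_injective {M : Matrix ι κ K}
    (h : Function.Injective M.vecMul) : Function.Surjective M.mulVec := by
  classical
  have hrank := (vecMul_injective_iff.mp h).rank_matrix
  rw [← coe_mulVecLin, ← LinearMap.range_eq_top]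
  apply Submodule.eq_top_of_finrank_eq
  rw [Module.finrank_fintype_fun_eq_card, ← hrank]
  rfl

end Matrix

namespace Polynomial

variable {R : Type*} [Semiring R]

theorem coeff_eq_coeff_add_of_eq_divX {w : ℕ → R[X]} (hw : ∀ i, w i = (w (i + 1)).divX)
    (i k t : ℕ) : (w i).coeff t = (w (i + k)).coeff (t + k) := by
  induction k with
  | zero => rfl
  | succ k ih => rw [ih, hw (i + k), coeff_divX]; rfl

theorem eq_zero_of_sum_smul_eq_zero_of_eq_divX {K : Type*} [Semiring K] [Module K R]
    {w : ℕ → R[X]} (hw : ∀ i, w i = (w (i + 1)).divX) {n : ℕ} {c : ℕ → K} (hc : c n = 1)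
    (h : ∑ i ∈ range (n + 1), c i • w i = 0) : w n = 0 := by
  by_contra hne
  have hlow : ∀ i ∈ range n, (w i).coeff (w n).natDegree = 0 := by
    intro i hi
    have hin : i + (n - i) = n := by have := mem_range.mp hi; omega
    rw [coeff_eq_coeff_add_of_eq_divX hw i (n - i), hin]
    exact coeff_eq_zero_of_natDegree_lt (by have := mem_range.mp hi; omega)
  have := congrArg (coeff · (w n).natDegree) h
  simp only [Finset.sum_range_succ, hc, one_smul, coeff_add, finsetSum_coeff, coeff_smul,
    coeff_zero] at this
  rw [Finset.sum_eq_zero (fun i hi => by rw [hlow i hi, smul_zero]), zero_add] at this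
  exact hne (leadingCoeff_eq_zero.mp this)

end Polynomial

section ShiftEvaluation

open Polynomial

variable {m : ℕ}

/-- `evalShift u j ω = ∑ₖ u (k + j) ⬝ᵥ ωₖ` is `(ω(σ) u)(j)`, the row polynomial `ω` applied to
the signal `u` through the forward shift `σ`. -/
noncomputable def evalShift (u : ℕ → Fin m → ℝ) (j : ℕ) : (Fin m → ℝ)[X] →ₗ[ℝ] ℝ :=
  lsum fun k => dotProductBilin ℝ ℝ (u (k + j))

theorem evalShift_eq_sum_range (u : ℕ → Fin m → ℝ) (j : ℕ) {N : ℕ} {ω : (Fin m → ℝ)[X]}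
    (hω : ω.degree < N) : evalShift u j ω = ∑ k ∈ range N, u (k + j) ⬝ᵥ ω.coeff k := by
  rw [evalShift, lsum_apply, sum_def]
  refine Finset.sum_subset (fun k hk => ?_) (fun k _ hk => ?_)
  · by_contra hkN
    exact mem_support_iff.mp hk ((degree_lt_iff_coeff_zero ω N).mp hω k (by simpa using hkN))
  · simp [notMem_support_iff.mp hk]

theorem evalShift_C_add_X_mul (u : ℕ → Fin m → ℝ) (j : ℕ) (a : Fin m → ℝ)
    (ω : (Fin m → ℝ)[X]) :
    evalShift u j (C a + X * ω) = u j ⬝ᵥ a + evalShift u (j + 1) ω := by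
  have hlhs : (C a + X * ω).degree < ↑(ω.natDegree + 2) := by
    rw [degree_lt_iff_coeff_zero]
    rintro (_ | k) hk
    · omega
    · simp [coeff_X_mul, coeff_eq_zero_of_natDegree_lt (by omega : ω.natDegree < k)]
  have hrhs : ω.degree < ↑(ω.natDegree + 1) :=
    degree_le_natDegree.trans_lt (by exact_mod_cast Nat.lt_succ_self _)
  rw [evalShift_eq_sum_range u j hlhs, evalShift_eq_sum_range u (j + 1) hrhs,
    Finset.sum_range_succ']
  simp [coeff_X_mul, add_right_comm _ 1 j, add_assoc, add_comm (u j ⬝ᵥ a)]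

end ShiftEvaluation

section Controllability

open Polynomial

variable {n m : ℕ} (A : Matrix (Fin n) (Fin n) ℝ) (B : Matrix (Fin n) (Fin m) ℝ)

/-- The input row of the relation `η ⬝ᵥ x + ξ(σ) u` after `i` forward shifts, once the state
`x (j + i)` is rewritten in terms of `x j`. -/
noncomputable def shiftedInputRow (η : Fin n → ℝ) (ξ : (Fin m → ℝ)[X]) : ℕ → (Fin m → ℝ)[X]
  | 0 => ξ
  | i + 1 => C (η ᵥ* (A ^ i * B)) + X * shiftedInputRow η ξ i

theorem shiftedInputRow_eq_divX (η : Fin n → ℝ) (ξ : (Fin m → ℝ)[X]) (i : ℕ) :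
    shiftedInputRow A B η ξ i = (shiftedInputRow A B η ξ (i + 1)).divX := by
  ext k : 1
  simp [shiftedInputRow, coeff_divX, coeff_X_mul]

variable {A B} {η : Fin n → ℝ} {ξ : (Fin m → ℝ)[X]}

theorem coeff_shiftedInputRow_add (i t : ℕ) :
    (shiftedInputRow A B η ξ i).coeff (t + i) = ξ.coeff t := by
  simpa [shiftedInputRow] using
    (coeff_eq_coeff_add_of_eq_divX (shiftedInputRow_eq_divX A B η ξ) 0 i t).symm

theorem degree_shiftedInputRow_lt {L : ℕ} (hξ : ξ.degree < L) (i : ℕ) :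
    (shiftedInputRow A B η ξ i).degree < ↑(L + i) := by
  rw [degree_lt_iff_coeff_zero]
  intro k hk
  rw [← Nat.sub_add_cancel (by omega : i ≤ k), coeff_shiftedInputRow_add]
  exact (degree_lt_iff_coeff_zero ξ L).mp hξ _ (by omega)

theorem eq_zero_of_shiftedInputRow_eq_zero (hctrb : (ctrbMat A B).rank = n)
    (h : shiftedInputRow A B η ξ n = 0) : η = 0 ∧ ξ = 0 := by
  refine ⟨vecMul_injective_of_rank_eq_card (by simpa using hctrb) ?_, ?_⟩
  · funext ⟨k, r⟩
    have hcoeff :=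
      coeff_eq_coeff_add_of_eq_divX (shiftedInputRow_eq_divX A B η ξ) (k + 1) (n - 1 - k) 0
    rw [show k + 1 + (n - 1 - k) = n by omega, h, coeff_zero] at hcoeff
    simpa [shiftedInputRow, ctrbMat, vecMul] using congrFun hcoeff r
  · ext t : 1
    rw [← coeff_shiftedInputRow_add (A := A) (B := B) (η := η) n t, h]
    simp

theorem dotProduct_add_evalShift_add {u : ℕ → Fin m → ℝ} {x : ℕ → Fin n → ℝ}
    (hx : ∀ k, x (k + 1) = A *ᵥ x k + B *ᵥ u k) (i j : ℕ) :
    η ⬝ᵥ x (j + i) + evalShift u (j + i) ξ =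
      (η ᵥ* A ^ i) ⬝ᵥ x j + evalShift u j (shiftedInputRow A B η ξ i) := by
  induction i generalizing j with
  | zero => simp [shiftedInputRow]
  | succ i ih =>
    rw [show j + (i + 1) = j + 1 + i by omega, ih, hx, shiftedInputRow, evalShift_C_add_X_mul,
      dotProduct_add, dotProduct_mulVec, dotProduct_mulVec, vecMul_vecMul, vecMul_vecMul,
      ← pow_succ, dotProduct_comm (u j)]
    ring

theorem eq_zero_of_dotProduct_add_evalShift_eq_zero {u : ℕ → Fin m → ℝ} {x : ℕ → Fin n → ℝ}
    (hx : ∀ k, x (k + 1) = A *ᵥ x k + B *ᵥ u k) (hctrb : (ctrbMat A B).rank = n) {L K : ℕ}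
    (hpe : ∀ γ : (Fin m → ℝ)[X], γ.degree < ↑(L + n) → (∀ j ≤ K, evalShift u j γ = 0) → γ = 0)
    (hξ : ξ.degree < L) (h : ∀ j ≤ K + n, η ⬝ᵥ x j + evalShift u j ξ = 0) :
    η = 0 ∧ ξ = 0 := by
  have hdim : A.charpoly.natDegree = n := by simp [charpoly_natDegree_eq_dim]
  obtain ⟨c, hc, hCH⟩ : ∃ c : ℕ → ℝ, c n = 1 ∧ ∑ i ∈ range (n + 1), c i • A ^ i = 0 := by
    refine ⟨fun i => A.charpoly.coeff i, ?_, ?_⟩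
    · simpa [hdim] using A.charpoly_monic.coeff_natDegree
    · simpa [aeval_eq_sum_range, hdim] using aeval_self_charpoly A
  set γ := ∑ i ∈ range (n + 1), c i • shiftedInputRow A B η ξ i
  -- Cayley–Hamilton removes the state from `∑ᵢ cᵢ σⁱ (η ⬝ᵥ x + ξ(σ) u)`.
  have hγ : ∀ j ≤ K, evalShift u j γ = 0 := by
    intro j hj
    have hterm : ∀ i ∈ range (n + 1), c i • evalShift u j (shiftedInputRow A B η ξ i) =
        -((c i • (η ᵥ* A ^ i)) ⬝ᵥ x j) := by
      intro i hi
      have := dotProduct_add_evalShift_add (η := η) (ξ := ξ) hx i j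
      rw [h (j + i) (by have := mem_range.mp hi; omega)] at this
      rw [smul_dotProduct, ← smul_neg, eq_neg_of_add_eq_zero_right this.symm]
    rw [map_sum, Finset.sum_congr rfl fun i _ => LinearMap.map_smul _ _ _,
      Finset.sum_congr rfl hterm, Finset.sum_neg_distrib, ← sum_dotProduct]
    simp_rw [← vecMul_smul, ← vecMul_sum, hCH, vecMul_zero, zero_dotProduct, neg_zero]
  have hγdeg : γ.degree < ↑(L + n) := by
    refine mem_degreeLT.mp (Submodule.sum_mem _ fun i hi => Submodule.smul_mem _ _ ?_)
    exact mem_degreeLT.mpr ((degree_shiftedInputRow_lt hξ i).trans_le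
      (by have := mem_range.mp hi; exact_mod_cast (by omega : L + i ≤ L + n)))
  exact eq_zero_of_shiftedInputRow_eq_zero hctrb
    (eq_zero_of_sum_smul_eq_zero_of_eq_divX (shiftedInputRow_eq_divX A B η ξ) hc (hpe γ hγdeg hγ))

end Controllability

section Trajectories

variable {n m p : ℕ} (A : Matrix (Fin n) (Fin n) ℝ) (B : Matrix (Fin n) (Fin m) ℝ)
  (C : Matrix (Fin p) (Fin n) ℝ) (D : Matrix (Fin p) (Fin m) ℝ)

def stateSeq (x₀ : Fin n → ℝ) (u : ℕ → Fin m → ℝ) : ℕ → Fin n → ℝ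
  | 0 => x₀
  | k + 1 => A *ᵥ stateSeq x₀ u k + B *ᵥ u k

theorem stateSeq_add (x₀ x₀' : Fin n → ℝ) (u u' : ℕ → Fin m → ℝ) (k : ℕ) :
    stateSeq A B (x₀ + x₀') (u + u') k = stateSeq A B x₀ u k + stateSeq A B x₀' u' k := by
  induction k with
  | zero => rfl
  | succ k ih => simp only [stateSeq, ih, mulVec_add, Pi.add_apply]; abel

theorem stateSeq_smul (a : ℝ) (x₀ : Fin n → ℝ) (u : ℕ → Fin m → ℝ) (k : ℕ) :
    stateSeq A B (a • x₀) (a • u) k = a • stateSeq A B x₀ u k := by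
  induction k with
  | zero => rfl
  | succ k ih => simp only [stateSeq, ih, mulVec_smul, Pi.smul_apply, smul_add]

theorem stateSeq_zero_input (x₀ : Fin n → ℝ) (k : ℕ) :
    stateSeq A B x₀ 0 k = (A ^ k) *ᵥ x₀ := by
  induction k with
  | zero => simp [stateSeq]
  | succ k ih => simp [stateSeq, ih, pow_succ', mulVec_mulVec]

def zeroExtend {L : ℕ} (u : Fin L → Fin m → ℝ) : ℕ → Fin m → ℝ :=
  fun k => if h : k < L then u ⟨k, h⟩ else 0

theorem zeroExtend_of_lt {L : ℕ} (u : Fin L → Fin m → ℝ) {k : ℕ} (h : k < L) :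
    zeroExtend u k = u ⟨k, h⟩ :=
  dif_pos h

theorem zeroExtend_zero {L : ℕ} : zeroExtend (0 : Fin L → Fin m → ℝ) = 0 := by
  funext k
  by_cases h : k < L <;> simp [zeroExtend, h]

theorem zeroExtend_add {L : ℕ} (u u' : Fin L → Fin m → ℝ) :
    zeroExtend (u + u') = zeroExtend u + zeroExtend u' := by
  funext k
  by_cases h : k < L <;> simp [zeroExtend, h]

theorem zeroExtend_smul {L : ℕ} (a : ℝ) (u : Fin L → Fin m → ℝ) :
    zeroExtend (a • u) = a • zeroExtend u := by
  funext k
  by_cases h : k < L <;> simp [zeroExtend, h]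

def output (x₀ : Fin n → ℝ) {L : ℕ} (u : Fin L → Fin m → ℝ) : Fin L → Fin p → ℝ :=
  fun k => C *ᵥ stateSeq A B x₀ (zeroExtend u) k + D *ᵥ u k

theorem output_add (x₀ x₀' : Fin n → ℝ) {L : ℕ} (u u' : Fin L → Fin m → ℝ) :
    output A B C D (x₀ + x₀') (u + u') = output A B C D x₀ u + output A B C D x₀' u' := by
  funext k
  simp only [output, zeroExtend_add, stateSeq_add, mulVec_add, Pi.add_apply]
  abel

theorem output_smul (a : ℝ) (x₀ : Fin n → ℝ) {L : ℕ} (u : Fin L → Fin m → ℝ) :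
    output A B C D (a • x₀) (a • u) = a • output A B C D x₀ u := by
  funext k
  simp only [output, zeroExtend_smul, stateSeq_smul, mulVec_smul, Pi.smul_apply, smul_add]

theorem eq_output_of_state {L : ℕ} {u : Fin L → Fin m → ℝ} {y : Fin L → Fin p → ℝ}
    {x : Fin (L + 1) → Fin n → ℝ}
    (hx : ∀ k : Fin L, x k.succ = A *ᵥ x k.castSucc + B *ᵥ u k)
    (hy : ∀ k : Fin L, y k = C *ᵥ x k.castSucc + D *ᵥ u k) :
    y = output A B C D (x 0) u := by
  have hstate : ∀ k : Fin (L + 1), x k = stateSeq A B (x 0) (zeroExtend u) k := by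
    intro k
    induction k using Fin.induction with
    | zero => rfl
    | succ k ih =>
      rw [hx, ih, Fin.val_succ, Fin.val_castSucc, stateSeq, zeroExtend_of_lt u k.isLt]
  funext k
  rw [hy, hstate]
  rfl

theorem isTrajectory_iff_exists_output_eq {L : ℕ} (u : Fin L → Fin m → ℝ)
    (y : Fin L → Fin p → ℝ) :
    IsTrajectory A B C D u y ↔ ∃ x₀, y = output A B C D x₀ u := by
  constructor
  · rintro ⟨x, hx, hy⟩
    exact ⟨x 0, eq_output_of_state A B C D hx hy⟩
  · rintro ⟨x₀, rfl⟩
    refine ⟨fun k => stateSeq A B x₀ (zeroExtend u) k, fun k => ?_, fun k => rfl⟩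
    simp [stateSeq, zeroExtend_of_lt u k.isLt]

def window {T L : ℕ} {E : Type*} (hLT : L ≤ T) (w : Fin T → E) (j : Fin (T - L + 1)) :
    Fin L → E :=
  fun k => w ⟨k + j, by omega⟩

theorem window_output {T L : ℕ} (hLT : L ≤ T) (x₀ : Fin n → ℝ) (u : Fin T → Fin m → ℝ)
    (j : Fin (T - L + 1)) :
    window hLT (output A B C D x₀ u) j =
      output A B C D (stateSeq A B x₀ (zeroExtend u) j) (window hLT u j) := by
  refine (eq_output_of_state A B C D (u := window hLT u j)
    (y := window hLT (output A B C D x₀ u) j) (x := fun k => stateSeq A B x₀ (zeroExtend u) (k + j))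
    (fun k => ?_) (fun k => rfl)).trans ?_
  · rw [Fin.val_succ, Fin.val_castSucc, add_right_comm, stateSeq, zeroExtend_of_lt u (by omega)]
    rfl
  · simp only [Fin.val_zero, zero_add]

end Trajectories

section TrajectoryMap

variable {n m p : ℕ} (A : Matrix (Fin n) (Fin n) ℝ) (B : Matrix (Fin n) (Fin m) ℝ)
  (C : Matrix (Fin p) (Fin n) ℝ) (D : Matrix (Fin p) (Fin m) ℝ)

theorem flatten_apply_add_mul {L q : ℕ} (w : Fin L → Fin q → ℝ) (k : Fin L) (r : Fin q) :
    flatten w ⟨r + q * k, by nlinarith [k.isLt, r.isLt]⟩ = w k r := by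
  have hq : 0 < q := r.pos
  simp only [flatten, Nat.add_mul_div_left _ _ hq, Nat.div_eq_of_lt r.isLt, zero_add,
    Nat.add_mul_mod_self_left, Nat.mod_eq_of_lt r.isLt]

theorem stackVec_add {L : ℕ} (u u' : Fin L → Fin m → ℝ) (y y' : Fin L → Fin p → ℝ) :
    stackVec (u + u') (y + y') = stackVec u y + stackVec u' y' := by
  funext i
  refine Fin.addCases (fun i => ?_) (fun i => ?_) i <;>
    simp only [stackVec, Fin.append_left, Fin.append_right, Pi.add_apply] <;> rfl

theorem stackVec_smul {L : ℕ} (a : ℝ) (u : Fin L → Fin m → ℝ) (y : Fin L → Fin p → ℝ) :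
    stackVec (a • u) (a • y) = a • stackVec u y := by
  funext i
  refine Fin.addCases (fun i => ?_) (fun i => ?_) i <;>
    simp only [stackVec, Fin.append_left, Fin.append_right, Pi.smul_apply] <;> rfl

theorem stackVec_eq_zero {L : ℕ} {u : Fin L → Fin m → ℝ} {y : Fin L → Fin p → ℝ}
    (h : stackVec u y = 0) : u = 0 ∧ y = 0 := by
  constructor
  · funext k r
    simpa [stackVec, flatten_apply_add_mul] using
      congrFun h (Fin.castAdd _ ⟨r + m * k, by nlinarith [k.isLt, r.isLt]⟩)
  · funext k r
    simpa [stackVec, flatten_apply_add_mul] using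
      congrFun h (Fin.natAdd _ ⟨r + p * k, by nlinarith [k.isLt, r.isLt]⟩)

/-- `(x₀, u) ↦ col(u, y)`; a vector on `Fin n ⊕ Fin L × Fin m` encodes the pair `(x₀, u)`. -/
noncomputable def trajectoryMap (L : ℕ) :
    (Fin n ⊕ Fin L × Fin m → ℝ) →ₗ[ℝ] Fin (m * L + p * L) → ℝ where
  toFun v := stackVec (fun k r => v (.inr (k, r)))
    (output A B C D (fun s => v (.inl s)) (fun k r => v (.inr (k, r))))
  map_add' v v' := by rw [← stackVec_add, ← output_add]; rfl
  map_smul' a v := by rw [← stackVec_smul, ← output_smul]; rfl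

theorem range_trajectoryMap (L : ℕ) :
    Set.range (trajectoryMap A B C D L) =
      {z | ∃ (u : Fin L → Fin m → ℝ) (y : Fin L → Fin p → ℝ),
        IsTrajectory A B C D u y ∧ z = stackVec u y} := by
  ext z
  simp only [Set.mem_range, Set.mem_ofPred_eq, isTrajectory_iff_exists_output_eq]
  constructor
  · rintro ⟨v, rfl⟩
    exact ⟨_, _, ⟨_, rfl⟩, rfl⟩
  · rintro ⟨u, y, ⟨x₀, rfl⟩, rfl⟩
    exact ⟨Sum.elim x₀ fun kr => u kr.1 kr.2, rfl⟩

theorem trajectoryMap_injective {L : ℕ} (hobs : (obsMat A C L).rank = n) :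
    Function.Injective (trajectoryMap A B C D L) := by
  refine (injective_iff_map_eq_zero _).mpr fun v hv => ?_
  obtain ⟨hu, hy⟩ := stackVec_eq_zero hv
  have hx₀ : (fun s => v (.inl s)) = 0 := by
    refine mulVec_injective_of_rank_eq_card (by simpa using hobs) ?_
    funext ⟨k, r⟩
    have := congrFun (congrFun hy k) r
    rw [hu] at this
    change ((C * A ^ (k : ℕ)) *ᵥ _) r = (obsMat A C L *ᵥ 0) (k, r)
    rw [mulVec_zero]
    simpa [output, zeroExtend_zero, stateSeq_zero_input, mulVec_mulVec] using this
  funext i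
  rcases i with s | ⟨k, r⟩
  · exact congrFun hx₀ s
  · exact congrFun (congrFun hu k) r

end TrajectoryMap

section DataMatrices

variable {n m p T : ℕ} (A : Matrix (Fin n) (Fin n) ℝ) (B : Matrix (Fin n) (Fin m) ℝ)
  (C : Matrix (Fin p) (Fin n) ℝ) (D : Matrix (Fin p) (Fin m) ℝ)

theorem vecMul_Hankel_eq_evalShift {N : ℕ} (hNT : N ≤ T) (u : Fin T → Fin m → ℝ)
    {ω : (Fin m → ℝ)[X]} (hω : ω.degree < N) :
    (fun kr : Fin N × Fin m => ω.coeff kr.1 kr.2) ᵥ* Hankel N hNT u =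
      fun j : Fin (T - N + 1) => evalShift (zeroExtend u) j ω := by
  funext j
  rw [evalShift_eq_sum_range _ _ hω, ← Fin.sum_univ_eq_sum_range]
  simp only [vecMul, dotProduct, Fintype.sum_prod_type]
  refine Finset.sum_congr rfl fun k _ => ?_
  rw [zeroExtend_of_lt u (by omega)]
  exact Finset.sum_congr rfl fun r _ => mul_comm _ _

theorem eq_zero_of_evalShift_eq_zero_of_rank_Hankel {N : ℕ} (hNT : N ≤ T) {u : Fin T → Fin m → ℝ}
    (hpe : (Hankel N hNT u).rank = m * N) {ω : (Fin m → ℝ)[X]} (hω : ω.degree < N)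
    (h : ∀ j ≤ T - N, evalShift (zeroExtend u) j ω = 0) : ω = 0 := by
  have hcoeff : (fun kr : Fin N × Fin m => ω.coeff kr.1 kr.2) = 0 := by
    refine vecMul_injective_of_rank_eq_card (M := Hankel N hNT u) (by simp [hpe, mul_comm]) ?_
    change _ ᵥ* _ = 0 ᵥ* _
    rw [vecMul_Hankel_eq_evalShift hNT u hω, zero_vecMul]
    funext j
    exact h j (by omega)
  ext k r
  by_cases hk : k < N
  · exact congrFun hcoeff (⟨k, hk⟩, r)
  · simp [(Polynomial.degree_lt_iff_coeff_zero ω N).mp hω k (by omega)]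

noncomputable def stateInputHankel {L : ℕ} (hLT : L ≤ T) (x₀ : Fin n → ℝ)
    (u : Fin T → Fin m → ℝ) :
    Matrix (Fin n ⊕ Fin L × Fin m) (Fin (T - L + 1)) ℝ :=
  fromRows (of fun s j => stateSeq A B x₀ (zeroExtend u) j s) (Hankel L hLT u)

theorem mulVec_stateInputHankel_surjective {L : ℕ} (hLnT : L + n ≤ T) (x₀ : Fin n → ℝ)
    (u : Fin T → Fin m → ℝ) (hctrb : (ctrbMat A B).rank = n)
    (hpe : (Hankel (L + n) hLnT u).rank = m * (L + n)) :
    Function.Surjective (stateInputHankel A B (by omega : L ≤ T) x₀ u).mulVec := by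
  refine mulVec_surjective_of_vecMul_injective <|
    (injective_iff_map_eq_zero (vecMulLinear _)).mpr fun v hv => ?_
  set ξ : (Fin m → ℝ)[X] :=
    ((Polynomial.degreeLTEquiv (Fin m → ℝ) L).symm fun k r => v (.inr (k, r)) :)
  have hξ : ξ.degree < L := Polynomial.mem_degreeLT.mp (Subtype.prop _)
  have hvξ : v ∘ Sum.inr = fun kr => ξ.coeff kr.1 kr.2 := by
    funext ⟨k, r⟩
    have h := (Polynomial.degreeLTEquiv (Fin m → ℝ) L).apply_symm_apply
      fun k r => v (.inr (k, r))
    exact (congrFun (congrFun h k) r).symm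
  have hrel : ∀ j ≤ T - (L + n) + n,
      v ∘ Sum.inl ⬝ᵥ stateSeq A B x₀ (zeroExtend u) j + evalShift (zeroExtend u) j ξ = 0 := by
    intro j hj
    have := congrFun hv ⟨j, by omega⟩
    rw [vecMulLinear_apply, stateInputHankel, vecMul_fromRows, hvξ,
      vecMul_Hankel_eq_evalShift _ _ hξ] at this
    simpa [vecMul, dotProduct] using this
  obtain ⟨hη, hξ0⟩ := eq_zero_of_dotProduct_add_evalShift_eq_zero (fun k => rfl) hctrb
    (fun γ hγ h => eq_zero_of_evalShift_eq_zero_of_rank_Hankel hLnT hpe hγ h) hξ hrel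
  funext i
  rcases i with s | ⟨k, r⟩
  · exact congrFun hη s
  · simpa [hξ0] using congrFun hvξ (k, r)

theorem stackedHankel_mulVecLin_eq {L : ℕ} (hLT : L ≤ T) (x₀ : Fin n → ℝ)
    (u : Fin T → Fin m → ℝ) :
    (stackedHankel L hLT u (output A B C D x₀ u)).mulVecLin =
      trajectoryMap A B C D L ∘ₗ (stateInputHankel A B hLT x₀ u).mulVecLin := by
  refine (Pi.basisFun ℝ _).ext fun j => ?_
  simp only [Pi.basisFun_apply, LinearMap.comp_apply, mulVecLin_apply, mulVec_single_one]
  change stackVec (window hLT u j) (window hLT (output A B C D x₀ u) j) = stackVec (window hLT u j)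
    (output A B C D (stateSeq A B x₀ (zeroExtend u) j) (window hLT u j))
  rw [window_output]

end DataMatrices

/-- **Willems' Fundamental Lemma.** Let `(ud, yd)` be a length-`T` trajectory of a
controllable and observable LTI system `(A, B, C, D)` of state dimension `n`, and let
`L ≥ 1` with `rank O_L = n`. If the input `ud` is persistently exciting of order `L + n`
(the depth-`(L+n)` block Hankel matrix of `ud` has full row rank `m * (L + n)`), then the
column space of the stacked Hankel matrix `col(H_L(ud), H_L(yd))` equals the subspace of
all stacked length-`L` trajectories `col(u, y)` of the system; equivalently, its rank is
`m * L + n`. -/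
theorem willems_fundamental_lemma
    (n m p T L : ℕ) (hLnT : L + n ≤ T)
    (A : Matrix (Fin n) (Fin n) ℝ) (B : Matrix (Fin n) (Fin m) ℝ)
    (C : Matrix (Fin p) (Fin n) ℝ) (D : Matrix (Fin p) (Fin m) ℝ)
    (hctrb : (ctrbMat A B).rank = n)
    (hobsL : (obsMat A C L).rank = n)
    (ud : Fin T → Fin m → ℝ) (yd : Fin T → Fin p → ℝ)
    (hd : IsTrajectory A B C D ud yd)
    (hpe : (Hankel (L + n) hLnT ud).rank = m * (L + n)) :
    ({z | ∃ c : Fin (T - L + 1) → ℝ,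
        z = (stackedHankel L (by omega) ud yd).mulVec c} =
      {z | ∃ (u : Fin L → Fin m → ℝ) (y : Fin L → Fin p → ℝ),
        IsTrajectory A B C D u y ∧ z = stackVec u y}) ∧
    (stackedHankel L (by omega : L ≤ T) ud yd).rank = m * L + n := by
  obtain ⟨x₀, rfl⟩ := (isTrajectory_iff_exists_output_eq A B C D ud yd).mp hd
  have hrange :
      LinearMap.range (stackedHankel L (by omega) ud (output A B C D x₀ ud)).mulVecLin =
        LinearMap.range (trajectoryMap A B C D L) := by
    rw [stackedHankel_mulVecLin_eq, LinearMap.range_comp_of_range_eq_top _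
      (LinearMap.range_eq_top.mpr (mulVec_stateInputHankel_surjective A B hLnT x₀ ud hctrb hpe))]
  constructor
  · rw [← range_trajectoryMap, ← LinearMap.coe_range, ← hrange, LinearMap.coe_range]
    ext z
    simp [eq_comm]
  · rw [rank, hrange, LinearMap.finrank_range_of_inj (trajectoryMap_injective A B C D hobsL),
      Module.finrank_fintype_fun_eq_card]
    simp [mul_comm, add_comm]
end
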